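/- Let P be a three-dimensional zonotope that is not a prism, and suppose P has an edge E whose belt B(E) has exactly 8 facets. Then P has another edge M, not parallel to E, whose belt B(M) has at least 8 facets. -/

import Mathlib

open Set Pointwise

/-- A face of dimension `d` of a convex set `P`. -/
def IsFaceOfDim (P F : Set (Fin 3 → ℝ)) (d : ℕ) : Prop :=
  IsExposed ℝ P F ∧ F.Nonempty ∧ Module.finrank ℝ ↥(vectorSpan ℝ F) = d

/-- The belt of `P` determined by an edge `E`. -/
def Belt (P E : Set (Fin 3 → ℝ)) : Set (Set (Fin 3 → ℝ)) :=
  {F | IsFaceOfDim P F 2 ∧ ∃ t : Fin 3 → ℝ, (fun y => y + t) '' E ⊆ F}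

/-- `P` is a zonotope in ℝ³: a Minkowski sum of finitely many pairwise linearly
independent segments centered at the origin. -/
def IsZonotope3 (P : Set (Fin 3 → ℝ)) : Prop :=
  ∃ (m : ℕ) (s : Fin m → (Fin 3 → ℝ)),
    (∀ i, s i ≠ 0) ∧
    (∀ i j, i ≠ j → ∀ a b : ℝ, a • s i + b • s j = 0 → a = 0 ∧ b = 0) ∧
    P = ∑ i, segment ℝ (-(s i)) (s i)

/-- `P` is a prism (cylinder): a Minkowski sum of a nondegenerate segment and a
planar polytope. -/
def IsPrism3 (P : Set (Fin 3 → ℝ)) : Prop :=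
  ∃ a b : Fin 3 → ℝ, a ≠ b ∧ ∃ Q : Set (Fin 3 → ℝ),
    (∃ S : Finset (Fin 3 → ℝ), Q = convexHull ℝ (S : Set (Fin 3 → ℝ))) ∧
    Coplanar ℝ Q ∧ P = segment ℝ a b + Q

noncomputable section BeltAux

abbrev V3 := Fin 3 → ℝ

/-- The set of maximizers of `l` on `A`. -/
def maxSet (l : V3 →ₗ[ℝ] ℝ) (A : Set V3) : Set V3 := {x | x ∈ A ∧ ∀ y ∈ A, l y ≤ l x}

lemma maxSet_subset (l : V3 →ₗ[ℝ] ℝ) (A : Set V3) : maxSet l A ⊆ A := fun _ h => h.1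

lemma maxSet_add (l : V3 →ₗ[ℝ] ℝ) (A B : Set V3) :
    maxSet l (A + B) = maxSet l A + maxSet l B := by
  ext x
  constructor
  · rintro ⟨hx, hmax⟩
    obtain ⟨a, ha, b, hb, rfl⟩ := Set.mem_add.1 hx
    refine Set.mem_add.2 ⟨a, ⟨ha, fun y hy => ?_⟩, b, ⟨hb, fun y hy => ?_⟩, rfl⟩
    · have := hmax (y + b) (Set.mem_add.2 ⟨y, hy, b, hb, rfl⟩)
      simpa [map_add] using this
    · have := hmax (a + y) (Set.mem_add.2 ⟨a, ha, y, hy, rfl⟩)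
      simpa [map_add] using this
  · rintro ⟨a, ⟨ha, hamax⟩, b, ⟨hb, hbmax⟩, rfl⟩
    refine ⟨Set.mem_add.2 ⟨a, ha, b, hb, rfl⟩, ?_⟩
    rintro y hy
    obtain ⟨a', ha', b', hb', rfl⟩ := Set.mem_add.1 hy
    simp only [map_add]
    exact add_le_add (hamax a' ha') (hbmax b' hb')

lemma maxSet_zero (l : V3 →ₗ[ℝ] ℝ) : maxSet l 0 = 0 := by
  ext x
  constructor
  · exact fun h => h.1
  · intro hx
    refine ⟨hx, fun y hy => ?_⟩
    have hx0 : x = 0 := hx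
    have hy0 : y = 0 := hy
    simp [hx0, hy0]

lemma maxSet_sum (l : V3 →ₗ[ℝ] ℝ) {ι : Type*} (t : Finset ι) (f : ι → Set V3) :
    maxSet l (∑ i ∈ t, f i) = ∑ i ∈ t, maxSet l (f i) := by
  classical
  induction t using Finset.cons_induction with
  | empty => simpa using maxSet_zero l
  | cons a t ha ih =>
    rw [Finset.sum_cons, Finset.sum_cons, maxSet_add, ih]

lemma seg_param (s : V3) (θ : ℝ) : (1 - θ) • (-s) + θ • s = (2*θ - 1) • s := by module

lemma mem_seg_iff (s x : V3) :
    x ∈ segment ℝ (-s) s ↔ ∃ θ : ℝ, θ ∈ Icc (0:ℝ) 1 ∧ x = (2*θ - 1) • s := by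
  rw [segment_eq_image]
  simp only [Set.mem_image]
  constructor
  · rintro ⟨θ, hθ, h⟩
    exact ⟨θ, hθ, by rw [← h, seg_param]⟩
  · rintro ⟨θ, hθ, h⟩
    exact ⟨θ, hθ, by rw [seg_param, ← h]⟩

lemma maxSet_seg_pos {l : V3 →ₗ[ℝ] ℝ} {s : V3} (h : 0 < l s) :
    maxSet l (segment ℝ (-s) s) = {s} := by
  ext x
  constructor
  · rintro ⟨hx, hmax⟩
    obtain ⟨θ, hθ, rfl⟩ := (mem_seg_iff s _).1 hx
    have hs : s ∈ segment ℝ (-s) s := right_mem_segment ℝ (-s) s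
    have h1 : l s ≤ l ((2*θ - 1) • s) := hmax s hs
    rw [map_smul, smul_eq_mul] at h1
    have h3 : θ = 1 := by nlinarith [hθ.2]
    subst h3
    have h21 : (2*(1:ℝ) - 1) = 1 := by norm_num
    rw [h21, one_smul]
    rfl
  · intro hx
    rw [Set.mem_singleton_iff] at hx
    refine ⟨hx ▸ right_mem_segment ℝ (-s) s, fun y hy => ?_⟩
    obtain ⟨θ, hθ, rfl⟩ := (mem_seg_iff s _).1 hy
    rw [hx, map_smul, smul_eq_mul]
    nlinarith [hθ.1, hθ.2]

lemma maxSet_seg_neg {l : V3 →ₗ[ℝ] ℝ} {s : V3} (h : l s < 0) :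
    maxSet l (segment ℝ (-s) s) = {-s} := by
  have h' : 0 < l (-s) := by rw [map_neg]; linarith
  have hseg : segment ℝ (-s) s = segment ℝ (-(-s)) (-s) := by
    rw [neg_neg, segment_symm]
  rw [hseg, maxSet_seg_pos h']

lemma maxSet_seg_zero {l : V3 →ₗ[ℝ] ℝ} {s : V3} (h : l s = 0) :
    maxSet l (segment ℝ (-s) s) = segment ℝ (-s) s := by
  have hz : ∀ y ∈ segment ℝ (-s) s, l y = 0 := by
    intro y hy
    obtain ⟨θ, _, rfl⟩ := (mem_seg_iff s _).1 hy
    rw [map_smul, smul_eq_mul, h, mul_zero]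
  ext x
  constructor
  · exact fun hx => hx.1
  · exact fun hx => ⟨hx, fun y hy => by rw [hz y hy, hz x hx]⟩

lemma sum_nonempty {ι : Type*} (t : Finset ι) (f : ι → Set V3)
    (hf : ∀ i ∈ t, (f i).Nonempty) : (∑ i ∈ t, f i).Nonempty := by
  classical
  induction t using Finset.cons_induction with
  | empty => exact ⟨0, by simp [Set.mem_zero]⟩
  | cons a t ha ih =>
    rw [Finset.sum_cons]
    exact Set.Nonempty.add (hf a (Finset.mem_cons_self a t))
      (ih fun i hi => hf i (Finset.mem_cons_of_mem hi))

lemma vectorSpan_add' (A B : Set V3) (hA : A.Nonempty) (hB : B.Nonempty) :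
    vectorSpan ℝ (A + B) = vectorSpan ℝ A ⊔ vectorSpan ℝ B := by
  apply le_antisymm
  · rw [vectorSpan_def]
    apply Submodule.span_le.2
    rintro v ⟨x, hx, y, hy, rfl⟩
    obtain ⟨a, ha, b, hb, rfl⟩ := Set.mem_add.1 hx
    obtain ⟨a', ha', b', hb', rfl⟩ := Set.mem_add.1 hy
    have hv : (a+b) -ᵥ (a'+b') = (a -ᵥ a') + (b -ᵥ b') := by
      simp only [vsub_eq_sub]; abel
    beta_reduce
    rw [hv]
    exact Submodule.add_mem _
      (Submodule.mem_sup_left (vsub_mem_vectorSpan ℝ ha ha'))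
      (Submodule.mem_sup_right (vsub_mem_vectorSpan ℝ hb hb'))
  · obtain ⟨a0, ha0⟩ := hA
    obtain ⟨b0, hb0⟩ := hB
    apply sup_le
    · rw [vectorSpan_def]
      apply Submodule.span_le.2
      rintro v ⟨x, hx, y, hy, rfl⟩
      have hv : x -ᵥ y = (x + b0) -ᵥ (y + b0) := by simp [vsub_eq_sub]
      beta_reduce
      rw [hv]
      exact vsub_mem_vectorSpan ℝ (Set.add_mem_add hx hb0) (Set.add_mem_add hy hb0)
    · rw [vectorSpan_def]
      apply Submodule.span_le.2
      rintro v ⟨x, hx, y, hy, rfl⟩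
      have hv : x -ᵥ y = (a0 + x) -ᵥ (a0 + y) := by simp [vsub_eq_sub]
      beta_reduce
      rw [hv]
      exact vsub_mem_vectorSpan ℝ (Set.add_mem_add ha0 hx) (Set.add_mem_add ha0 hy)

lemma vectorSpan_sum {ι : Type*} (t : Finset ι) (f : ι → Set V3)
    (hf : ∀ i ∈ t, (f i).Nonempty) :
    vectorSpan ℝ (∑ i ∈ t, f i) = t.sup fun i => vectorSpan ℝ (f i) := by
  classical
  induction t using Finset.cons_induction with
  | empty =>
    have h0 : (0 : Set V3) = {0} := by ext; simp [Set.mem_zero]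
    simp [h0]
  | cons a t ha ih =>
    rw [Finset.sum_cons, Finset.sup_cons,
      vectorSpan_add' _ _ (hf a (Finset.mem_cons_self a t))
        (sum_nonempty t f fun i hi => hf i (Finset.mem_cons_of_mem hi)),
      ih fun i hi => hf i (Finset.mem_cons_of_mem hi)]

lemma vectorSpan_seg (s : V3) :
    vectorSpan ℝ (segment ℝ (-s) s) = Submodule.span ℝ {s} := by
  apply le_antisymm
  · rw [vectorSpan_def]
    apply Submodule.span_le.2
    rintro v ⟨x, hx, y, hy, rfl⟩
    obtain ⟨θ, _, rfl⟩ := (mem_seg_iff s _).1 hx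
    obtain ⟨θ', _, rfl⟩ := (mem_seg_iff s _).1 hy
    have hv : (2*θ-1) • s -ᵥ ((2*θ'-1) • s) = (2*θ - 2*θ') • s := by
      simp only [vsub_eq_sub]; module
    beta_reduce
    rw [hv]
    exact Submodule.smul_mem _ _ (Submodule.mem_span_singleton_self s)
  · rw [Submodule.span_le, Set.singleton_subset_iff]
    have h1 : s ∈ segment ℝ (-s) s := right_mem_segment ℝ (-s) s
    have h0 : (0:V3) ∈ segment ℝ (-s) s := by
      rw [mem_seg_iff]
      exact ⟨1/2, by norm_num, by norm_num⟩
    have := vsub_mem_vectorSpan ℝ h1 h0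
    simpa using this

lemma vectorSpan_translate (t : V3) (E : Set V3) :
    vectorSpan ℝ ((fun y => y + t) '' E) = vectorSpan ℝ E := by
  apply le_antisymm
  · rw [vectorSpan_def]
    apply Submodule.span_le.2
    rintro v ⟨x, hx, y, hy, rfl⟩
    obtain ⟨a, ha, rfl⟩ := hx
    obtain ⟨b, hb, rfl⟩ := hy
    have hv : (a + t) -ᵥ (b + t) = a -ᵥ b := by simp [vsub_eq_sub]
    beta_reduce
    rw [hv]
    exact vsub_mem_vectorSpan ℝ ha hb
  · rw [vectorSpan_def]
    apply Submodule.span_le.2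
    rintro v ⟨x, hx, y, hy, rfl⟩
    have hv : x -ᵥ y = (x + t) -ᵥ (y + t) := by simp [vsub_eq_sub]
    beta_reduce
    rw [hv]
    exact vsub_mem_vectorSpan ℝ ⟨x, hx, rfl⟩ ⟨y, hy, rfl⟩

section Cross
open Matrix

/-- Dot product with a fixed vector, as a linear map. -/
def dotL (w : V3) : V3 →ₗ[ℝ] ℝ where
  toFun x := w ⬝ᵥ x
  map_add' x y := by simp [dotProduct_add]
  map_smul' c x := by simp [dotProduct_smul, smul_eq_mul]

lemma dotL_apply (w x : V3) : dotL w x = w ⬝ᵥ x := rfl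

lemma range_pair (u v : V3) : Set.range ![u, v] = {u, v} := by
  ext x
  constructor
  · rintro ⟨i, rfl⟩
    fin_cases i <;> simp
  · rintro (rfl | rfl)
    · exact ⟨0, rfl⟩
    · exact ⟨1, rfl⟩

lemma finrank_span_pair {u v : V3} (h : LinearIndependent ℝ ![u, v]) :
    Module.finrank ℝ ↥(Submodule.span ℝ {u, v}) = 2 := by
  have := finrank_span_eq_card h
  rwa [range_pair, Fintype.card_fin] at this

lemma cross_ne_zero {u v : V3} (h : LinearIndependent ℝ ![u, v]) :
    crossProduct u v ≠ 0 := by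
  intro hc
  have h0 : u 1 * v 2 - u 2 * v 1 = 0 := by
    have := congrFun hc 0
    simpa [cross_apply] using this
  have h1 : u 2 * v 0 - u 0 * v 2 = 0 := by
    have := congrFun hc 1
    simpa [cross_apply] using this
  have h2 : u 0 * v 1 - u 1 * v 0 = 0 := by
    have := congrFun hc 2
    simpa [cross_apply] using this
  have hu : u ≠ 0 := by
    intro hu
    have := (LinearIndependent.pair_iff.1 h 1 0 (by simp [hu])).1
    norm_num at this
  have hdep : ∃ c : ℝ, v = c • u := by
    by_cases hu0 : u 0 ≠ 0
    · refine ⟨v 0 / u 0, ?_⟩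
      funext k
      fin_cases k <;> simp [Pi.smul_apply, smul_eq_mul] <;> field_simp <;> nlinarith [h0, h1, h2]
    · by_cases hu1 : u 1 ≠ 0
      · refine ⟨v 1 / u 1, ?_⟩
        funext k
        fin_cases k <;> simp [Pi.smul_apply, smul_eq_mul] <;> field_simp <;> nlinarith [h0, h1, h2]
      · have hu2 : u 2 ≠ 0 := by
          intro hu2
          apply hu
          funext k
          fin_cases k <;> simp_all
        refine ⟨v 2 / u 2, ?_⟩
        funext k
        fin_cases k <;> simp [Pi.smul_apply, smul_eq_mul] <;> field_simp <;> nlinarith [h0, h1, h2]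
  obtain ⟨c, rfl⟩ := hdep
  have := (LinearIndependent.pair_iff.1 h (-c) 1 (by module)).2
  norm_num at this

lemma dotL_cross_left (u v : V3) : dotL (crossProduct u v) u = 0 := by
  rw [dotL_apply, dotProduct_comm]
  exact dot_self_cross u v

lemma dotL_cross_right (u v : V3) : dotL (crossProduct u v) v = 0 := by
  rw [dotL_apply, dotProduct_comm]
  exact dot_cross_self u v

lemma dotL_cross_ne_zero {u v : V3} (h : LinearIndependent ℝ ![u, v]) :
    dotL (crossProduct u v) ≠ 0 := by
  intro h0
  apply cross_ne_zero h
  have := congrArg (fun f => f (crossProduct u v)) h0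
  simp only [dotL_apply, LinearMap.zero_apply] at this
  exact dotProduct_self_eq_zero.1 this

lemma ker_dotL_cross {u v : V3} (h : LinearIndependent ℝ ![u, v]) :
    LinearMap.ker (dotL (crossProduct u v)) = Submodule.span ℝ {u, v} := by
  apply le_antisymm
  · intro x hx
    rw [LinearMap.mem_ker] at hx
    by_contra hxs
    have hQle : Submodule.span ℝ {u, v, x} ≤ LinearMap.ker (dotL (crossProduct u v)) := by
      rw [Submodule.span_le]
      intro y hy
      rw [SetLike.mem_coe, LinearMap.mem_ker]
      rcases hy with h | h | h
      · rw [h]; exact dotL_cross_left u v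
      · rw [h]; exact dotL_cross_right u v
      · rw [h]; exact hx
    rcases le_or_gt (Module.finrank ℝ ↥(Submodule.span ℝ {u, v, x})) 2 with hr | hr
    · have hle : Submodule.span ℝ {u, v} ≤ Submodule.span ℝ {u, v, x} :=
        Submodule.span_mono (by intro y hy; simp only [Set.mem_insert_iff, Set.mem_singleton_iff] at hy ⊢; tauto)
      have heq : Submodule.span ℝ {u, v} = Submodule.span ℝ {u, v, x} := by
        apply Submodule.eq_of_le_of_finrank_le hle
        rw [finrank_span_pair h] at *
        exact hr
      exact hxs (heq ▸ Submodule.subset_span (by right; right; rfl))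
    · have h3 : Module.finrank ℝ ↥(Submodule.span ℝ {u, v, x}) = 3 := by
        have hle3 : Module.finrank ℝ ↥(Submodule.span ℝ {u, v, x}) ≤ 3 := by
          have := Submodule.finrank_le (Submodule.span ℝ {u, v, x} : Submodule ℝ V3)
          simpa using this
        omega
      have htop : Submodule.span ℝ {u, v, x} = ⊤ :=
        Submodule.eq_top_of_finrank_eq (by simpa using h3)
      have : LinearMap.ker (dotL (crossProduct u v)) = ⊤ := top_unique (htop ▸ hQle)
      exact dotL_cross_ne_zero h (LinearMap.ker_eq_top.1 this)
  · rw [Submodule.span_le]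
    intro y hy
    rw [SetLike.mem_coe, LinearMap.mem_ker]
    rcases hy with h | h
    · rw [h]; exact dotL_cross_left u v
    · rw [h]; exact dotL_cross_right u v

end Cross

section Functionals

lemma maxSet_smul_pos {c : ℝ} (hc : 0 < c) (l : V3 →ₗ[ℝ] ℝ) (A : Set V3) :
    maxSet (c • l) A = maxSet l A := by
  ext x
  unfold maxSet
  simp only [Set.mem_setOf_eq, LinearMap.smul_apply, smul_eq_mul]
  constructor
  · rintro ⟨hx, hmax⟩
    exact ⟨hx, fun y hy => le_of_mul_le_mul_left (hmax y hy) hc⟩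
  · rintro ⟨hx, hmax⟩
    exact ⟨hx, fun y hy => mul_le_mul_of_nonneg_left (hmax y hy) hc.le⟩

lemma maxSet_smul_neg {c : ℝ} (hc : c < 0) (l : V3 →ₗ[ℝ] ℝ) (A : Set V3) :
    maxSet (c • l) A = maxSet (-l) A := by
  have h : c • l = (-c) • (-l) := by ext y; simp
  rw [h, maxSet_smul_pos (by linarith : (0:ℝ) < -c)]

lemma eq_smul_of_ker_eq {l l' : V3 →ₗ[ℝ] ℝ} (hl : l ≠ 0)
    (hker : LinearMap.ker l = LinearMap.ker l') : ∃ c : ℝ, l' = c • l := by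
  obtain ⟨x, hx⟩ : ∃ x, l x ≠ 0 := by
    by_contra h
    push_neg at h
    exact hl (LinearMap.ext fun y => by rw [h y, LinearMap.zero_apply])
  refine ⟨l' x / l x, ?_⟩
  apply LinearMap.ext
  intro y
  have hmem : y - (l y / l x) • x ∈ LinearMap.ker l := by
    rw [LinearMap.mem_ker, map_sub, map_smul, smul_eq_mul]
    field_simp
    ring
  rw [hker, LinearMap.mem_ker, map_sub, map_smul, smul_eq_mul] at hmem
  have h2 : l' y = (l y / l x) * l' x := by linarith
  rw [LinearMap.smul_apply, smul_eq_mul, h2]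
  ring

lemma finrank_V3 : Module.finrank ℝ V3 = 3 := by
  simp [Module.finrank_pi]

lemma finrank_ker_eq_two {l : V3 →ₗ[ℝ] ℝ} (hl : l ≠ 0) :
    Module.finrank ℝ ↥(LinearMap.ker l) = 2 := by
  have h := LinearMap.finrank_range_add_finrank_ker l
  have h1 : Module.finrank ℝ ↥(LinearMap.range l) = 1 := by
    have hne : LinearMap.range l ≠ ⊥ := fun hb => hl (LinearMap.range_eq_bot.1 hb)
    have hle : Module.finrank ℝ ↥(LinearMap.range l) ≤ 1 := by
      have := Submodule.finrank_le (LinearMap.range l)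
      simpa [Module.finrank_self] using this
    have hpos : Module.finrank ℝ ↥(LinearMap.range l) ≠ 0 := by
      rw [Ne, Submodule.finrank_eq_zero]
      exact hne
    omega
  rw [h1, finrank_V3] at h
  omega

end Functionals

section Zono

variable {m : ℕ}

/-- The zonotope generated by `s`. -/
def Zo (s : Fin m → V3) : Set V3 := ∑ i, segment ℝ (-(s i)) (s i)

lemma maxSet_Zo (s : Fin m → V3) (l : V3 →ₗ[ℝ] ℝ) :
    maxSet l (Zo s) = ∑ i, maxSet l (segment ℝ (-(s i)) (s i)) :=
  maxSet_sum l Finset.univ _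

lemma seg_maxSet_nonempty (s : Fin m → V3) (l : V3 →ₗ[ℝ] ℝ) (i : Fin m) :
    (maxSet l (segment ℝ (-(s i)) (s i))).Nonempty := by
  rcases lt_trichotomy (l (s i)) 0 with h | h | h
  · rw [maxSet_seg_neg h]; exact ⟨_, rfl⟩
  · rw [maxSet_seg_zero h]; exact ⟨_, right_mem_segment ℝ _ _⟩
  · rw [maxSet_seg_pos h]; exact ⟨_, rfl⟩

lemma maxSet_Zo_nonempty (s : Fin m → V3) (l : V3 →ₗ[ℝ] ℝ) :
    (maxSet l (Zo s)).Nonempty := by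
  rw [maxSet_Zo]
  exact sum_nonempty _ _ fun i _ => seg_maxSet_nonempty s l i

lemma Zo_nonempty (s : Fin m → V3) : (Zo s).Nonempty :=
  sum_nonempty _ _ fun i _ => ⟨_, right_mem_segment ℝ _ _⟩

lemma vectorSpan_maxSet_Zo (s : Fin m → V3) (l : V3 →ₗ[ℝ] ℝ) :
    vectorSpan ℝ (maxSet l (Zo s)) = Submodule.span ℝ (s '' {i | l (s i) = 0}) := by
  rw [maxSet_Zo, vectorSpan_sum _ _ fun i _ => seg_maxSet_nonempty s l i]
  apply le_antisymm
  · apply Finset.sup_le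
    intro i _
    rcases lt_trichotomy (l (s i)) 0 with h | h | h
    · rw [maxSet_seg_neg h, vectorSpan_singleton]
      exact bot_le
    · rw [maxSet_seg_zero h, vectorSpan_seg]
      apply Submodule.span_mono
      rw [Set.singleton_subset_iff]
      exact ⟨i, h, rfl⟩
    · rw [maxSet_seg_pos h, vectorSpan_singleton]
      exact bot_le
  · rw [Submodule.span_le]
    rintro v ⟨i, hi, rfl⟩
    have hvs : vectorSpan ℝ (maxSet l (segment ℝ (-(s i)) (s i))) = Submodule.span ℝ {s i} := by
      rw [maxSet_seg_zero hi, vectorSpan_seg]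
    have hle := Finset.le_sup (f := fun i => vectorSpan ℝ (maxSet l (segment ℝ (-(s i)) (s i))))
      (Finset.mem_univ i)
    beta_reduce at hle
    rw [hvs] at hle
    exact hle (Submodule.mem_span_singleton_self (s i))

lemma maxSet_zero_fn (A : Set V3) : maxSet (0 : V3 →ₗ[ℝ] ℝ) A = A := by
  ext x
  exact ⟨fun h => h.1, fun h => ⟨h, fun y _ => le_refl _⟩⟩

lemma vectorSpan_Zo (s : Fin m → V3) :
    vectorSpan ℝ (Zo s) = Submodule.span ℝ (Set.range s) := by
  have h := vectorSpan_maxSet_Zo s 0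
  rw [maxSet_zero_fn] at h
  rw [h]
  congr 1
  ext v
  simp

lemma isExposed_maxSet (l : V3 →ₗ[ℝ] ℝ) (A : Set V3) : IsExposed ℝ A (maxSet l A) :=
  fun _ => ⟨LinearMap.toContinuousLinearMap l, by
    ext x
    simp only [maxSet, Set.mem_setOf_eq, Set.sep_setOf, LinearMap.coe_toContinuousLinearMap']⟩

lemma exposed_eq_maxSet {A F : Set V3} (hF : IsExposed ℝ A F) (hne : F.Nonempty) :
    ∃ l : V3 →ₗ[ℝ] ℝ, F = maxSet l A := by
  obtain ⟨l, hl⟩ := hF hne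
  exact ⟨l.toLinearMap, by rw [hl]; rfl⟩

end Zono

section Helpers

variable {m : ℕ}

lemma pair_indep {x u : V3} (hx : x ≠ 0) (hu : u ∉ Submodule.span ℝ {x}) :
    LinearIndependent ℝ ![x, u] := by
  rw [LinearIndependent.pair_iff]
  intro a b hab
  by_cases hb : b = 0
  · subst hb
    have ha : a • x = 0 := by linear_combination (norm := module) hab
    rcases smul_eq_zero.1 ha with h | h
    · exact ⟨h, rfl⟩
    · exact absurd h hx
  · exfalso
    apply hu
    have hbu : b • u = (-a) • x := by linear_combination (norm := module) hab
    rw [Submodule.mem_span_singleton]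
    refine ⟨-a / b, ?_⟩
    have h1 : (-a/b) • x = b⁻¹ • ((-a) • x) := by
      rw [smul_smul]
      congr 1
      field_simp
    rw [h1, ← hbu, smul_smul, inv_mul_cancel₀ hb, one_smul]

lemma sum_mem_sum {ι : Type*} (t : Finset ι) (f : ι → Set V3) (x : ι → V3)
    (hx : ∀ i ∈ t, x i ∈ f i) : (∑ i ∈ t, x i) ∈ ∑ i ∈ t, f i := by
  classical
  induction t using Finset.cons_induction with
  | empty => simp [Set.mem_zero]
  | cons a t ha ih =>
    rw [Finset.sum_cons, Finset.sum_cons]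
    exact Set.add_mem_add (hx a (Finset.mem_cons_self a t))
      (ih fun i hi => hx i (Finset.mem_cons_of_mem hi))

lemma zero_mem_seg (v : V3) : (0:V3) ∈ segment ℝ (-v) v := by
  rw [mem_seg_iff]
  exact ⟨1/2, by norm_num, by norm_num⟩

lemma mem_Zo (s : Fin m → V3) (i : Fin m) : s i ∈ Zo s := by
  classical
  have h := sum_mem_sum Finset.univ (fun j => segment ℝ (-(s j)) (s j))
    (fun j => if j = i then s i else 0) ?_
  · simpa [Zo, Finset.sum_ite_eq, Finset.sum_ite_eq'] using h
  · intro j _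
    by_cases hj : j = i
    · subst hj; simp [right_mem_segment]
    · simp [hj, zero_mem_seg]

lemma neg_mem_Zo (s : Fin m → V3) (i : Fin m) : -(s i) ∈ Zo s := by
  classical
  have h := sum_mem_sum Finset.univ (fun j => segment ℝ (-(s j)) (s j))
    (fun j => if j = i then -(s i) else 0) ?_
  · simpa [Zo, Finset.sum_ite_eq, Finset.sum_ite_eq'] using h
  · intro j _
    by_cases hj : j = i
    · subst hj; simp [left_mem_segment]
    · simp [hj, zero_mem_seg]

lemma sup_span (s : Fin m → V3) (t : Finset (Fin m)) :
    (t.sup fun j => Submodule.span ℝ {s j}) = Submodule.span ℝ (s '' ↑t) := by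
  apply le_antisymm
  · apply Finset.sup_le
    intro j hj
    apply Submodule.span_mono
    rw [Set.singleton_subset_iff]
    exact ⟨j, hj, rfl⟩
  · rw [Submodule.span_le]
    rintro v ⟨j, hj, rfl⟩
    exact Finset.le_sup (f := fun j => Submodule.span ℝ {s j}) hj
      (Submodule.mem_span_singleton_self (s j))

lemma sum_translate_subset {ι : Type*} (t : Finset ι) (f g : ι → Set V3) (c : ι → V3)
    (h : ∀ i ∈ t, (fun y => y + c i) '' f i ⊆ g i) :
    (fun y => y + ∑ i ∈ t, c i) '' (∑ i ∈ t, f i) ⊆ ∑ i ∈ t, g i := by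
  classical
  induction t using Finset.cons_induction with
  | empty =>
    intro x hx
    obtain ⟨a, ha, rfl⟩ := hx
    simpa [Set.mem_zero] using ha
  | cons a t ha ih =>
    rintro x ⟨y, hy, rfl⟩
    rw [Finset.sum_cons] at hy
    obtain ⟨p, hp, q, hq, rfl⟩ := Set.mem_add.1 hy
    rw [Finset.sum_cons, Finset.sum_cons]
    have hp' : p + c a ∈ g a := h a (Finset.mem_cons_self a t) ⟨p, hp, rfl⟩
    have hq' : q + ∑ i ∈ t, c i ∈ ∑ i ∈ t, g i :=
      ih (fun i hi => h i (Finset.mem_cons_of_mem hi)) ⟨q, hq, rfl⟩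
    have heq : p + q + (c a + ∑ i ∈ t, c i) = (p + c a) + (q + ∑ i ∈ t, c i) := by abel
    beta_reduce
    rw [heq]
    exact Set.add_mem_add hp' hq'

lemma Zo_convexHull (s : Fin m → V3) (t : Finset (Fin m)) :
    ∃ S : Finset V3, (∑ j ∈ t, segment ℝ (-(s j)) (s j)) = convexHull ℝ (S : Set V3) := by
  classical
  induction t using Finset.cons_induction with
  | empty =>
    refine ⟨{0}, ?_⟩
    have h0 : (0 : Set V3) = {0} := by ext; simp [Set.mem_zero]
    simp [h0]
  | cons a t ha ih =>
    obtain ⟨S, hS⟩ := ih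
    refine ⟨({-(s a), s a} : Finset V3) + S, ?_⟩
    rw [Finset.sum_cons, hS, ← convexHull_pair, ← convexHull_add]
    congr 1
    simp [Finset.coe_add]

end Helpers

section MainM

variable {m : ℕ} {s : Fin m → V3}

/-- The planes through direction `i0` spanned together with another generator. -/
def PlaneSet (s : Fin m → V3) (i0 : Fin m) : Set (Submodule ℝ V3) :=
  (fun j => Submodule.span ℝ {s i0, s j}) '' {j | j ≠ i0}

open scoped Classical in
/-- A choice of a nonzero functional with kernel `H` (if one exists). -/
def kfun (H : Submodule ℝ V3) : V3 →ₗ[ℝ] ℝ :=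
  if h : ∃ l : V3 →ₗ[ℝ] ℝ, l ≠ 0 ∧ LinearMap.ker l = H then h.choose else 0

open scoped Classical in
lemma kfun_spec {H : Submodule ℝ V3} (h : ∃ l : V3 →ₗ[ℝ] ℝ, l ≠ 0 ∧ LinearMap.ker l = H) :
    kfun H ≠ 0 ∧ LinearMap.ker (kfun H) = H := by
  rw [kfun, dif_pos h]
  exact h.choose_spec

lemma plane_kfun {i0 : Fin m} (hli : ∀ i j, i ≠ j → LinearIndependent ℝ ![s i, s j])
    {H : Submodule ℝ V3} (hH : H ∈ PlaneSet s i0) :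
    kfun H ≠ 0 ∧ LinearMap.ker (kfun H) = H := by
  obtain ⟨j, hj, rfl⟩ := hH
  exact kfun_spec ⟨dotL (crossProduct (s i0) (s j)),
    dotL_cross_ne_zero (hli i0 j (Ne.symm hj)), ker_dotL_cross (hli i0 j (Ne.symm hj))⟩

lemma plane_finrank {i0 : Fin m} (hli : ∀ i j, i ≠ j → LinearIndependent ℝ ![s i, s j])
    {H : Submodule ℝ V3} (hH : H ∈ PlaneSet s i0) : Module.finrank ℝ ↥H = 2 := by
  obtain ⟨j, hj, rfl⟩ := hH
  exact finrank_span_pair (hli i0 j (Ne.symm hj))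

/-- One of the two facets corresponding to a plane. -/
def facet (s : Fin m → V3) (ε : Bool) (H : Submodule ℝ V3) : Set V3 :=
  maxSet (if ε then kfun H else -(kfun H)) (Zo s)

lemma facet_fn_ne_zero {i0 : Fin m} (hli : ∀ i j, i ≠ j → LinearIndependent ℝ ![s i, s j])
    {H : Submodule ℝ V3} (hH : H ∈ PlaneSet s i0) (ε : Bool) :
    (if ε then kfun H else -(kfun H)) ≠ 0 := by
  cases ε
  · simpa using (plane_kfun hli hH).1
  · simpa using (plane_kfun hli hH).1

lemma facet_fn_ker {i0 : Fin m} (hli : ∀ i j, i ≠ j → LinearIndependent ℝ ![s i, s j])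
    {H : Submodule ℝ V3} (hH : H ∈ PlaneSet s i0) (ε : Bool) :
    LinearMap.ker (if ε then kfun H else -(kfun H)) = H := by
  cases ε
  · have h1 : (if (false : Bool) then kfun H else -(kfun H)) = -(kfun H) := rfl
    have h2 : LinearMap.ker (-(kfun H)) = LinearMap.ker (kfun H) := by
      ext x; simp
    rw [h1, h2, (plane_kfun hli hH).2]
  · have h1 : (if (true : Bool) then kfun H else -(kfun H)) = kfun H := rfl
    rw [h1, (plane_kfun hli hH).2]

lemma span_image_eq_of_ker {l : V3 →ₗ[ℝ] ℝ} (hl : l ≠ 0) {i0 j : Fin m} (hj : j ≠ i0)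
    (hli : ∀ i j, i ≠ j → LinearIndependent ℝ ![s i, s j])
    (hi0 : l (s i0) = 0) (hjz : l (s j) = 0) :
    Submodule.span ℝ (s '' {i | l (s i) = 0}) = LinearMap.ker l := by
  have hle : Submodule.span ℝ (s '' {i | l (s i) = 0}) ≤ LinearMap.ker l := by
    rw [Submodule.span_le]
    rintro v ⟨i, hi, rfl⟩
    exact LinearMap.mem_ker.2 hi
  have hpair : Submodule.span ℝ {s i0, s j} ≤ Submodule.span ℝ (s '' {i | l (s i) = 0}) := by
    rw [Submodule.span_le]
    rintro v (h | h)
    · rw [h]; exact Submodule.subset_span ⟨i0, hi0, rfl⟩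
    · rw [h]; exact Submodule.subset_span ⟨j, hjz, rfl⟩
  apply Submodule.eq_of_le_of_finrank_le hle
  rw [finrank_ker_eq_two hl]
  calc (2:ℕ) = Module.finrank ℝ ↥(Submodule.span ℝ {s i0, s j}) :=
        (finrank_span_pair (hli i0 j (Ne.symm hj))).symm
    _ ≤ _ := Submodule.finrank_mono hpair

lemma vectorSpan_facet {i0 : Fin m} (hli : ∀ i j, i ≠ j → LinearIndependent ℝ ![s i, s j])
    {H : Submodule ℝ V3} (hH : H ∈ PlaneSet s i0) (ε : Bool) :
    vectorSpan ℝ (facet s ε H) = H := by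
  obtain ⟨j, hj, hHj⟩ := hH
  set l := (if ε then kfun H else -(kfun H)) with hldef
  have hker : LinearMap.ker l = H := facet_fn_ker hli ⟨j, hj, hHj⟩ ε
  have hlne : l ≠ 0 := facet_fn_ne_zero hli ⟨j, hj, hHj⟩ ε
  have hi0 : l (s i0) = 0 := by
    have : s i0 ∈ H := by
      rw [← hHj]; exact Submodule.subset_span (Or.inl rfl)
    rw [← hker] at this
    exact LinearMap.mem_ker.1 this
  have hjz : l (s j) = 0 := by
    have : s j ∈ H := by
      rw [← hHj]; exact Submodule.subset_span (Or.inr rfl)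
    rw [← hker] at this
    exact LinearMap.mem_ker.1 this
  rw [facet, ← hldef, vectorSpan_maxSet_Zo, span_image_eq_of_ker hlne hj hli hi0 hjz, hker]

lemma facet_nonempty (ε : Bool) (H : Submodule ℝ V3) : (facet s ε H).Nonempty :=
  maxSet_Zo_nonempty s _

lemma maxSet_neg_ne (htop : Submodule.span ℝ (Set.range s) = ⊤)
    {l : V3 →ₗ[ℝ] ℝ} (hl : l ≠ 0) : maxSet l (Zo s) ≠ maxSet (-l) (Zo s) := by
  intro heq
  obtain ⟨x, hx⟩ := maxSet_Zo_nonempty s l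
  have hx2 : x ∈ maxSet (-l) (Zo s) := heq ▸ hx
  have hconst : ∀ y ∈ Zo s, l y = l x := by
    intro y hy
    have h1 := hx.2 y hy
    have h2 := hx2.2 y hy
    simp only [LinearMap.neg_apply, neg_le_neg_iff] at h2
    linarith
  have hzero : ∀ i, l (s i) = 0 := by
    intro i
    have h1 := hconst (s i) (mem_Zo s i)
    have h2 := hconst (-(s i)) (neg_mem_Zo s i)
    rw [map_neg] at h2
    linarith
  apply hl
  rw [← LinearMap.ker_eq_top, eq_top_iff, ← htop, Submodule.span_le]
  rintro v ⟨i, rfl⟩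
  exact LinearMap.mem_ker.2 (hzero i)

lemma facet_inj {i0 : Fin m} (hli : ∀ i j, i ≠ j → LinearIndependent ℝ ![s i, s j])
    (htop : Submodule.span ℝ (Set.range s) = ⊤)
    {H H' : Submodule ℝ V3} (hH : H ∈ PlaneSet s i0) (hH' : H' ∈ PlaneSet s i0)
    {ε ε' : Bool} (heq : facet s ε H = facet s ε' H') : H = H' ∧ ε = ε' := by
  have hHH : H = H' := by
    rw [← vectorSpan_facet hli hH ε, ← vectorSpan_facet hli hH' ε', heq]
  subst hHH
  refine ⟨rfl, ?_⟩
  by_contra hee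
  have hk := (plane_kfun hli hH).1
  cases ε <;> cases ε' <;> simp_all
  · exact maxSet_neg_ne htop hk heq.symm
  · exact maxSet_neg_ne htop hk heq

end MainM

section BeltCount

variable {m : ℕ} {s : Fin m → V3}

lemma Zo_def (s : Fin m → V3) : Zo s = ∑ i, segment ℝ (-(s i)) (s i) := rfl

lemma singleton_translate (σ τ : V3) : (fun y => y + (τ - σ)) '' {σ} ⊆ {τ} := by
  rw [Set.image_singleton]
  intro x hx
  rw [Set.mem_singleton_iff] at hx ⊢
  rw [hx]
  abel

lemma singleton_to_seg (σ v : V3) :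
    (fun y => y + (0 - σ)) '' {σ} ⊆ segment ℝ (-v) v := by
  refine subset_trans (singleton_translate σ 0) ?_
  intro x hx
  rw [Set.mem_singleton_iff] at hx
  rw [hx]
  exact zero_mem_seg v

lemma facet_mem_belt (hli : ∀ i j, i ≠ j → LinearIndependent ℝ ![s i, s j])
    {g : V3 →ₗ[ℝ] ℝ} {i0 : Fin m} (hJg : {i | g (s i) = 0} = {i0})
    {H : Submodule ℝ V3} (hH : H ∈ PlaneSet s i0) (ε : Bool) :
    facet s ε H ∈ Belt (Zo s) (maxSet g (Zo s)) := by
  classical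
  set l := (if ε then kfun H else -(kfun H)) with hl
  have hker : LinearMap.ker l = H := facet_fn_ker hli hH ε
  have hfrank : Module.finrank ℝ ↥(vectorSpan ℝ (facet s ε H)) = 2 := by
    rw [vectorSpan_facet hli hH ε]
    exact plane_finrank hli hH
  have hsi0H : s i0 ∈ H := by
    obtain ⟨j, hj, rfl⟩ := hH
    exact Submodule.subset_span (Or.inl rfl)
  have hli0 : l (s i0) = 0 := by
    rw [← hker] at hsi0H
    exact LinearMap.mem_ker.1 hsi0H
  refine ⟨⟨?_, facet_nonempty ε H, hfrank⟩, ?_⟩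
  · rw [facet, ← hl]
    exact isExposed_maxSet l (Zo s)
  · have hc : ∀ i : Fin m, ∃ ci : V3,
        (fun y => y + ci) '' (maxSet g (segment ℝ (-(s i)) (s i)))
          ⊆ maxSet l (segment ℝ (-(s i)) (s i)) := by
      intro i
      by_cases hgi : g (s i) = 0
      · have hii : i = i0 := by
          have : i ∈ ({i0} : Set (Fin m)) := hJg ▸ hgi
          exact this
        subst hii
        refine ⟨0, ?_⟩
        rw [maxSet_seg_zero hgi, maxSet_seg_zero hli0]
        rintro x ⟨y, hy, rfl⟩
        simpa using hy
      · by_cases hlI : l (s i) = 0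
        · rcases lt_or_gt_of_ne hgi with h | h
          · exact ⟨0 - (-(s i)), by
              rw [maxSet_seg_neg h, maxSet_seg_zero hlI]
              exact singleton_to_seg _ _⟩
          · exact ⟨0 - s i, by
              rw [maxSet_seg_pos h, maxSet_seg_zero hlI]
              exact singleton_to_seg _ _⟩
        · rcases lt_or_gt_of_ne hgi with hg | hg <;> rcases lt_or_gt_of_ne hlI with hl2 | hl2
          · exact ⟨-(s i) - (-(s i)), by
              rw [maxSet_seg_neg hg, maxSet_seg_neg hl2]
              exact singleton_translate _ _⟩
          · exact ⟨s i - (-(s i)), by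
              rw [maxSet_seg_neg hg, maxSet_seg_pos hl2]
              exact singleton_translate _ _⟩
          · exact ⟨-(s i) - s i, by
              rw [maxSet_seg_pos hg, maxSet_seg_neg hl2]
              exact singleton_translate _ _⟩
          · exact ⟨s i - s i, by
              rw [maxSet_seg_pos hg, maxSet_seg_pos hl2]
              exact singleton_translate _ _⟩
    choose c hcspec using hc
    refine ⟨∑ i, c i, ?_⟩
    rw [maxSet_Zo s g, facet, ← hl, maxSet_Zo s l]
    exact sum_translate_subset Finset.univ _ _ c fun i _ => hcspec i

lemma belt_subset (hs0 : ∀ i, s i ≠ 0)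
    (hli : ∀ i j, i ≠ j → LinearIndependent ℝ ![s i, s j])
    (htop : Submodule.span ℝ (Set.range s) = ⊤)
    {g : V3 →ₗ[ℝ] ℝ} {i0 : Fin m} (hJg : {i | g (s i) = 0} = {i0}) :
    Belt (Zo s) (maxSet g (Zo s)) ⊆
      (facet s true '' PlaneSet s i0) ∪ (facet s false '' PlaneSet s i0) := by
  rintro F ⟨⟨hexp, hne, hrank⟩, t, htr⟩
  obtain ⟨l, rfl⟩ := exposed_eq_maxSet hexp hne
  have hlne : l ≠ 0 := by
    rintro rfl
    rw [maxSet_zero_fn, vectorSpan_Zo, htop] at hrank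
    rw [finrank_top, finrank_V3] at hrank
    omega
  have hvs : vectorSpan ℝ (maxSet l (Zo s)) = Submodule.span ℝ (s '' {i | l (s i) = 0}) :=
    vectorSpan_maxSet_Zo s l
  have hrank2 : Module.finrank ℝ ↥(Submodule.span ℝ (s '' {i | l (s i) = 0})) = 2 := by
    rw [← hvs]; exact hrank
  -- the direction of E lies in the span
  have hEvs : Submodule.span ℝ {s i0} ≤ vectorSpan ℝ (maxSet l (Zo s)) := by
    have h1 : vectorSpan ℝ ((fun y => y + t) '' (maxSet g (Zo s))) ≤
        vectorSpan ℝ (maxSet l (Zo s)) := vectorSpan_mono ℝ htr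
    rw [vectorSpan_translate, vectorSpan_maxSet_Zo, hJg, Set.image_singleton] at h1
    exact h1
  have hsi0 : l (s i0) = 0 := by
    have h2 : s i0 ∈ vectorSpan ℝ (maxSet l (Zo s)) :=
      hEvs (Submodule.mem_span_singleton_self _)
    rw [hvs] at h2
    have hle : Submodule.span ℝ (s '' {i | l (s i) = 0}) ≤ LinearMap.ker l := by
      rw [Submodule.span_le]
      rintro v ⟨i, hi, rfl⟩
      exact LinearMap.mem_ker.2 hi
    exact LinearMap.mem_ker.1 (hle h2)
  obtain ⟨j, hjz, hjne⟩ : ∃ j, l (s j) = 0 ∧ j ≠ i0 := by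
    by_contra h
    push_neg at h
    have hsub : s '' {i | l (s i) = 0} ⊆ {s i0} := by
      rintro v ⟨i, hi, rfl⟩
      rw [h i hi]
      exact Set.mem_singleton _
    have hmono : Module.finrank ℝ ↥(Submodule.span ℝ (s '' {i | l (s i) = 0})) ≤
        Module.finrank ℝ ↥(Submodule.span ℝ ({s i0} : Set V3)) :=
      Submodule.finrank_mono (Submodule.span_mono hsub)
    rw [hrank2, finrank_span_singleton (hs0 i0)] at hmono
    omega
  have hkerH : Submodule.span ℝ (s '' {i | l (s i) = 0}) = LinearMap.ker l :=
    span_image_eq_of_ker hlne hjne hli hsi0 hjz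
  have hpairH : Submodule.span ℝ {s i0, s j} = LinearMap.ker l := by
    apply Submodule.eq_of_le_of_finrank_le
    · rw [Submodule.span_le]
      rintro v (h | h)
      · rw [h]; exact LinearMap.mem_ker.2 hsi0
      · rw [h]; exact LinearMap.mem_ker.2 hjz
    · rw [finrank_ker_eq_two hlne, finrank_span_pair (hli i0 j (Ne.symm hjne))]
  have hHmem : LinearMap.ker l ∈ PlaneSet s i0 := ⟨j, hjne, hpairH⟩
  obtain ⟨hkne, hkker⟩ := plane_kfun hli hHmem
  obtain ⟨cc, hcc⟩ := eq_smul_of_ker_eq hkne (hkker.trans rfl)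
  have hccne : cc ≠ 0 := by
    rintro rfl
    rw [zero_smul] at hcc
    exact hlne hcc
  rcases lt_or_gt_of_ne hccne with hcn | hcp
  · right
    refine ⟨LinearMap.ker l, hHmem, ?_⟩
    rw [facet]
    have h1 : (if (false : Bool) then kfun (LinearMap.ker l) else -(kfun (LinearMap.ker l)))
        = -(kfun (LinearMap.ker l)) := rfl
    rw [h1, ← maxSet_smul_neg hcn, ← hcc]
  · left
    refine ⟨LinearMap.ker l, hHmem, ?_⟩
    rw [facet]
    have h1 : (if (true : Bool) then kfun (LinearMap.ker l) else -(kfun (LinearMap.ker l)))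
        = kfun (LinearMap.ker l) := rfl
    rw [h1, ← maxSet_smul_pos hcp, ← hcc]

lemma belt_eq (hs0 : ∀ i, s i ≠ 0)
    (hli : ∀ i j, i ≠ j → LinearIndependent ℝ ![s i, s j])
    (htop : Submodule.span ℝ (Set.range s) = ⊤)
    {g : V3 →ₗ[ℝ] ℝ} {i0 : Fin m} (hJg : {i | g (s i) = 0} = {i0}) :
    Belt (Zo s) (maxSet g (Zo s)) =
      (facet s true '' PlaneSet s i0) ∪ (facet s false '' PlaneSet s i0) := by
  apply le_antisymm (belt_subset hs0 hli htop hJg)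
  rintro F (⟨H, hH, rfl⟩ | ⟨H, hH, rfl⟩)
  · exact facet_mem_belt hli hJg hH true
  · exact facet_mem_belt hli hJg hH false

lemma belt_ncard (hs0 : ∀ i, s i ≠ 0)
    (hli : ∀ i j, i ≠ j → LinearIndependent ℝ ![s i, s j])
    (htop : Submodule.span ℝ (Set.range s) = ⊤)
    {g : V3 →ₗ[ℝ] ℝ} {i0 : Fin m} (hJg : {i | g (s i) = 0} = {i0}) :
    (Belt (Zo s) (maxSet g (Zo s))).ncard = 2 * (PlaneSet s i0).ncard := by
  rw [belt_eq hs0 hli htop hJg]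
  have hfin : (PlaneSet s i0).Finite := (Set.toFinite _).image _
  have hinjT : Set.InjOn (facet s true) (PlaneSet s i0) :=
    fun H hH H' hH' h => (facet_inj hli htop hH hH' h).1
  have hinjF : Set.InjOn (facet s false) (PlaneSet s i0) :=
    fun H hH H' hH' h => (facet_inj hli htop hH hH' h).1
  have hdisj : Disjoint (facet s true '' PlaneSet s i0) (facet s false '' PlaneSet s i0) := by
    rw [Set.disjoint_left]
    rintro F ⟨H, hH, rfl⟩ ⟨H', hH', heq⟩
    exact Bool.noConfusion (facet_inj hli htop hH' hH heq).2
  rw [Set.ncard_union_eq hdisj (hfin.image _) (hfin.image _),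
    Set.ncard_image_of_injOn hinjT, Set.ncard_image_of_injOn hinjF]
  ring

lemma edge_classify (hs0 : ∀ i, s i ≠ 0)
    (hli : ∀ i j, i ≠ j → LinearIndependent ℝ ![s i, s j])
    {E : Set V3} (hE : IsFaceOfDim (Zo s) E 1) :
    ∃ (g : V3 →ₗ[ℝ] ℝ) (i0 : Fin m), E = maxSet g (Zo s) ∧ {i | g (s i) = 0} = {i0} := by
  obtain ⟨l, rfl⟩ := exposed_eq_maxSet hE.1 hE.2.1
  have hrank := hE.2.2
  rw [vectorSpan_maxSet_Zo] at hrank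
  have hJne : {i | l (s i) = 0}.Nonempty := by
    by_contra h
    rw [Set.not_nonempty_iff_eq_empty] at h
    rw [h, Set.image_empty, Submodule.span_empty] at hrank
    rw [finrank_bot ℝ V3] at hrank
    omega
  obtain ⟨i0, hi0⟩ := hJne
  refine ⟨l, i0, rfl, ?_⟩
  ext j
  simp only [Set.mem_setOf_eq, Set.mem_singleton_iff]
  constructor
  · intro hj
    by_contra hne
    have hpair : Submodule.span ℝ {s j, s i0} ≤ Submodule.span ℝ (s '' {i | l (s i) = 0}) := by
      rw [Submodule.span_le]
      rintro v (h | h)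
      · rw [h]; exact Submodule.subset_span ⟨j, hj, rfl⟩
      · rw [h]; exact Submodule.subset_span ⟨i0, hi0, rfl⟩
    have h2 := Submodule.finrank_mono hpair
    rw [hrank, finrank_span_pair (hli j i0 hne)] at h2
    omega
  · intro hj
    rw [hj]
    exact hi0

end BeltCount

section Generic

variable {m : ℕ} {s : Fin m → V3}

lemma exists_not_mem_of_finrank_lt (W : Submodule ℝ V3) (h : Module.finrank ℝ ↥W < 3) :
    ∃ v, v ∉ W := by
  by_contra h2
  push_neg at h2
  have htop : W = ⊤ := Submodule.eq_top_iff'.2 h2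
  rw [htop, finrank_top, finrank_V3] at h
  omega

lemma finrank_span_pair_le (a b : V3) :
    Module.finrank ℝ ↥(Submodule.span ℝ {a, b}) ≤ 2 := by
  classical
  have h : Module.finrank ℝ ↥(Submodule.span ℝ ((({a, b} : Finset V3)) : Set V3)) ≤
      ({a, b} : Finset V3).card := finrank_span_finset_le_card _
  have hcoe : ((({a, b} : Finset V3)) : Set V3) = {a, b} := by simp
  rw [hcoe] at h
  refine h.trans ?_
  refine (Finset.card_insert_le a {b}).trans ?_
  simp

lemma exists_generic (hs0 : ∀ i, s i ≠ 0)
    (hli : ∀ i j, i ≠ j → LinearIndependent ℝ ![s i, s j]) (i1 : Fin m) :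
    ∃ g : V3 →ₗ[ℝ] ℝ, {i | g (s i) = 0} = {i1} := by
  classical
  obtain ⟨u, hu⟩ := exists_not_mem_of_finrank_lt (Submodule.span ℝ {s i1})
    (by rw [finrank_span_singleton (hs0 i1)]; omega)
  obtain ⟨v, hv⟩ := exists_not_mem_of_finrank_lt (Submodule.span ℝ {s i1, u})
    (by rw [finrank_span_pair (pair_indep (hs0 i1) hu)]; omega)
  have hvnotin : v ∉ Submodule.span ℝ {s i1} := by
    intro h
    exact hv (Submodule.span_mono (by simp [Set.singleton_subset_iff]) h)
  set Bad0 : Set ℝ := {t | u + t • v ∈ Submodule.span ℝ {s i1}} with hBad0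
  set Bad : Fin m → Set ℝ := fun j => {t | s j ∈ Submodule.span ℝ {s i1, u + t • v}} with hBad
  have hBad0sub : Bad0.Subsingleton := by
    intro t ht t' ht'
    by_contra htt
    have ht1 : u + t • v ∈ Submodule.span ℝ {s i1} := ht
    have ht2 : u + t' • v ∈ Submodule.span ℝ {s i1} := ht'
    have hsub : (t - t') • v ∈ Submodule.span ℝ {s i1} := by
      have h3 := Submodule.sub_mem _ ht1 ht2
      have heq : (u + t • v) - (u + t' • v) = (t - t') • v := by module
      rwa [heq] at h3
    have hvmem : v ∈ Submodule.span ℝ {s i1} := by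
      have h2 := Submodule.smul_mem _ ((t - t')⁻¹) hsub
      rwa [smul_smul, inv_mul_cancel₀ (sub_ne_zero.2 htt), one_smul] at h2
    exact hvnotin hvmem
  have hBadsub : ∀ j, j ≠ i1 → (Bad j).Subsingleton := by
    intro j hj t ht t' ht'
    by_contra htt
    have hK : ∀ r ∈ Bad j, Submodule.span ℝ {s i1, u + r • v} = Submodule.span ℝ {s i1, s j} := by
      intro r hr
      have hle : Submodule.span ℝ {s i1, s j} ≤ Submodule.span ℝ {s i1, u + r • v} := by
        rw [Submodule.span_le]
        rintro w (h | h)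
        · rw [h]; exact Submodule.subset_span (Or.inl rfl)
        · rw [h]
          exact hr
      have h1 := finrank_span_pair_le (s i1) (u + r • v)
      have h2 := finrank_span_pair (hli i1 j (Ne.symm hj))
      exact (Submodule.eq_of_le_of_finrank_le hle (by rw [h2]; exact h1)).symm
    have hKt := hK t ht
    have hKt' := hK t' ht'
    have hmem1 : u + t • v ∈ Submodule.span ℝ {s i1, s j} := by
      rw [← hKt]; exact Submodule.subset_span (Or.inr rfl)
    have hmem2 : u + t' • v ∈ Submodule.span ℝ {s i1, s j} := by
      rw [← hKt']; exact Submodule.subset_span (Or.inr rfl)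
    have hvK : v ∈ Submodule.span ℝ {s i1, s j} := by
      have hsub := Submodule.sub_mem _ hmem1 hmem2
      have heq : (u + t • v) - (u + t' • v) = (t - t') • v := by module
      rw [heq] at hsub
      have h2 := Submodule.smul_mem _ ((t - t')⁻¹) hsub
      rwa [smul_smul, inv_mul_cancel₀ (sub_ne_zero.2 htt), one_smul] at h2
    have huK : u ∈ Submodule.span ℝ {s i1, s j} := by
      have : (u + t • v) - t • v ∈ Submodule.span ℝ {s i1, s j} :=
        Submodule.sub_mem _ hmem1 (Submodule.smul_mem _ _ hvK)
      simpa using this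
    have hKeq : Submodule.span ℝ {s i1, u} = Submodule.span ℝ {s i1, s j} := by
      apply Submodule.eq_of_le_of_finrank_le
      · rw [Submodule.span_le]
        rintro w (h | h)
        · rw [h]; exact Submodule.subset_span (Or.inl rfl)
        · rw [h]; exact huK
      · rw [finrank_span_pair (hli i1 j (Ne.symm hj))]
        have := finrank_span_pair (pair_indep (hs0 i1) hu)
        omega
    exact hv (hKeq ▸ hvK)
  have hfin : (Bad0 ∪ ⋃ j ∈ {j : Fin m | j ≠ i1}, Bad j).Finite := by
    apply Set.Finite.union hBad0sub.finite
    apply Set.Finite.biUnion (Set.toFinite _)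
    intro j hj
    exact (hBadsub j hj).finite
  obtain ⟨t, ht⟩ := (hfin.infinite_compl).nonempty
  rw [Set.mem_compl_iff, Set.mem_union, not_or] at ht
  obtain ⟨ht0, htj⟩ := ht
  have hw : u + t • v ∉ Submodule.span ℝ {s i1} := ht0
  have hpw : LinearIndependent ℝ ![s i1, u + t • v] := pair_indep (hs0 i1) hw
  refine ⟨dotL (crossProduct (s i1) (u + t • v)), ?_⟩
  ext i
  simp only [Set.mem_setOf_eq, Set.mem_singleton_iff]
  constructor
  · intro hi
    by_contra hne
    apply htj
    rw [Set.mem_iUnion]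
    refine ⟨i, ?_⟩
    rw [Set.mem_iUnion]
    refine ⟨hne, ?_⟩
    have : s i ∈ LinearMap.ker (dotL (crossProduct (s i1) (u + t • v))) :=
      LinearMap.mem_ker.2 hi
    rwa [ker_dotL_cross hpw] at this
  · intro hi
    rw [hi]
    exact dotL_cross_left _ _

end Generic

section Prism

variable {m : ℕ} {s : Fin m → V3}

lemma prism_of_flat (hs0 : ∀ i, s i ≠ 0) (i : Fin m)
    (hflat : Module.finrank ℝ ↥(Submodule.span ℝ (s '' {j | j ≠ i})) ≤ 2) :
    IsPrism3 (Zo s) := by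
  classical
  refine ⟨-(s i), s i, ?_, ∑ j ∈ Finset.univ.erase i, segment ℝ (-(s j)) (s j), ?_, ?_, ?_⟩
  · intro h
    apply hs0 i
    have h2 : (2:ℝ) • s i = 0 := by linear_combination (norm := module) - h
    simpa using smul_eq_zero.1 h2
  · exact Zo_convexHull s _
  · have hvs : vectorSpan ℝ (∑ j ∈ Finset.univ.erase i, segment ℝ (-(s j)) (s j)) =
        Submodule.span ℝ (s '' {j | j ≠ i}) := by
      rw [vectorSpan_sum _ _ fun j _ => ⟨_, right_mem_segment ℝ _ _⟩]
      have h1 : ∀ j : Fin m, vectorSpan ℝ (segment ℝ (-(s j)) (s j)) = Submodule.span ℝ {s j} :=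
        fun j => vectorSpan_seg (s j)
      have h2 : ((Finset.univ.erase i : Finset (Fin m)) : Set (Fin m)) = {j | j ≠ i} := by
        ext j; simp
      calc (Finset.univ.erase i).sup (fun j => vectorSpan ℝ (segment ℝ (-(s j)) (s j)))
          = (Finset.univ.erase i).sup (fun j => Submodule.span ℝ {s j}) := by
            apply Finset.sup_congr rfl
            intro j _
            exact h1 j
        _ = Submodule.span ℝ (s '' ↑(Finset.univ.erase i)) := sup_span s _
        _ = Submodule.span ℝ (s '' {j | j ≠ i}) := by rw [h2]
    rw [coplanar_iff_finrank_le_two, hvs]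
    exact hflat
  · rw [Zo_def]
    exact (Finset.add_sum_erase _ _ (Finset.mem_univ i)).symm

lemma htop_of_nonprism (hs0 : ∀ i, s i ≠ 0) (hnp : ¬ IsPrism3 (Zo s)) (i : Fin m) :
    Submodule.span ℝ (Set.range s) = ⊤ := by
  by_contra h
  apply hnp
  apply prism_of_flat hs0 i
  have hle3 : Module.finrank ℝ ↥(Submodule.span ℝ (Set.range s)) ≤ 3 := by
    have := Submodule.finrank_le (Submodule.span ℝ (Set.range s))
    rwa [finrank_V3] at this
  have hne3 : Module.finrank ℝ ↥(Submodule.span ℝ (Set.range s)) ≠ 3 := by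
    intro h3
    exact h (Submodule.eq_top_of_finrank_eq (by rw [h3, finrank_V3]))
  have hmono : Module.finrank ℝ ↥(Submodule.span ℝ (s '' {j | j ≠ i})) ≤
      Module.finrank ℝ ↥(Submodule.span ℝ (Set.range s)) :=
    Submodule.finrank_mono (Submodule.span_mono (by rintro w ⟨j, _, rfl⟩; exact ⟨j, rfl⟩))
  omega

lemma nonflat_of_nonprism (hs0 : ∀ i, s i ≠ 0) (hnp : ¬ IsPrism3 (Zo s)) :
    ∀ i : Fin m, ¬ (Module.finrank ℝ ↥(Submodule.span ℝ (s '' {j | j ≠ i})) ≤ 2) :=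
  fun i h => hnp (prism_of_flat hs0 i h)

end Prism


section CoreAux

variable {m : ℕ} {s : Fin m → V3}

/-- The plane spanned by two generators. -/
def pls (s : Fin m → V3) (i j : Fin m) : Submodule ℝ V3 := Submodule.span ℝ {s i, s j}

lemma pls_mem_left (i j : Fin m) : s i ∈ pls s i j := Submodule.subset_span (Or.inl rfl)

lemma pls_mem_right (i j : Fin m) : s j ∈ pls s i j := Submodule.subset_span (Or.inr rfl)

lemma pls_comm (i j : Fin m) : pls s i j = pls s j i := by
  rw [pls, pls, Set.pair_comm]

lemma pls_rank (hli : ∀ i j, i ≠ j → LinearIndependent ℝ ![s i, s j])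
    {i j : Fin m} (hij : i ≠ j) : Module.finrank ℝ ↥(pls s i j) = 2 :=
  finrank_span_pair (hli i j hij)

lemma pls_eq_of_mem (hli : ∀ i j, i ≠ j → LinearIndependent ℝ ![s i, s j])
    {i j : Fin m} (hij : i ≠ j) {H : Submodule ℝ V3}
    (hH : Module.finrank ℝ ↥H = 2) (hi : s i ∈ H) (hj : s j ∈ H) : pls s i j = H := by
  apply Submodule.eq_of_le_of_finrank_le
  · rw [pls, Submodule.span_le]
    rintro v (h | h)
    · rw [h]; exact hi
    · rw [h]; exact hj
  · rw [hH, pls_rank hli hij]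

lemma mem_PlaneSet {i j : Fin m} (hij : j ≠ i) : pls s i j ∈ PlaneSet s i := ⟨j, hij, rfl⟩

lemma four_le_ncard {α : Type*} {A : Set α} (hfin : A.Finite) {a b c d : α}
    (ha : a ∈ A) (hb : b ∈ A) (hc : c ∈ A) (hd : d ∈ A)
    (hab : a ≠ b) (hac : a ≠ c) (had : a ≠ d)
    (hbc : b ≠ c) (hbd : b ≠ d) (hcd : c ≠ d) : 4 ≤ A.ncard := by
  have hsub : ({a, b, c, d} : Set α) ⊆ A := by
    intro x hx
    rcases hx with h | h | h | h
    · rw [h]; exact ha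
    · rw [h]; exact hb
    · rw [h]; exact hc
    · rw [Set.mem_singleton_iff.1 h]; exact hd
  have hfin2 : ({c, d} : Set α).Finite := (Set.finite_singleton d).insert c
  have hfin3 : ({b, c, d} : Set α).Finite := hfin2.insert b
  have hfin4 : ({a, b, c, d} : Set α).Finite := hfin3.insert a
  have h4 : ({a, b, c, d} : Set α).ncard = 4 := by
    rw [Set.ncard_insert_of_notMem (by simp [hab, hac, had]) hfin3,
      Set.ncard_insert_of_notMem (by simp [hbc, hbd]) hfin2,
      Set.ncard_pair hcd]
  calc 4 = ({a, b, c, d} : Set α).ncard := h4.symm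
    _ ≤ A.ncard := Set.ncard_le_ncard hsub hfin

/-- Pigeonhole: if a point `f` lies on at most 3 connecting planes, then among any three
directions off the plane of `f` and `i0`, two are coplanar with `f`. -/
lemma pigeon (hli : ∀ i j, i ≠ j → LinearIndependent ℝ ![s i, s j])
    {f i0 : Fin m} (hf : f ≠ i0)
    (hc3 : (PlaneSet s f).ncard ≤ 3) {u v w : Fin m}
    (hu : u ≠ f) (hv : v ≠ f) (hw : w ≠ f)
    (huv : u ≠ v) (huw : u ≠ w) (hvw : v ≠ w)
    (hu0 : s u ∉ pls s f i0) (hv0 : s v ∉ pls s f i0) (hw0 : s w ∉ pls s f i0) :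
    ∃ p q : Fin m, p ≠ q ∧ p ∈ ({u, v, w} : Set (Fin m)) ∧ q ∈ ({u, v, w} : Set (Fin m)) ∧
      s f ∈ pls s p q := by
  have hfin : (PlaneSet s f).Finite := (Set.toFinite _).image _
  have step : ∀ x y : Fin m, x ≠ y → x ≠ f → y ≠ f → pls s f x = pls s f y →
      s f ∈ pls s x y := by
    intro x y hxy hxf hyf hpe
    have hyx : s y ∈ pls s f x := by rw [hpe]; exact pls_mem_right f y
    have : pls s x y = pls s f x :=
      pls_eq_of_mem hli hxy (pls_rank hli (Ne.symm hxf)) (pls_mem_right f x) hyx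
    rw [this]
    exact pls_mem_left f x
  by_cases h1 : pls s f u = pls s f v
  · exact ⟨u, v, huv, by simp, by simp, step u v huv hu hv h1⟩
  by_cases h2 : pls s f u = pls s f w
  · exact ⟨u, w, huw, by simp, by simp, step u w huw hu hw h2⟩
  by_cases h3 : pls s f v = pls s f w
  · exact ⟨v, w, hvw, by simp, by simp, step v w hvw hv hw h3⟩
  exfalso
  have hne1 : pls s f i0 ≠ pls s f u := by
    intro h
    exact hu0 (h ▸ pls_mem_right f u)
  have hne2 : pls s f i0 ≠ pls s f v := by
    intro h
    exact hv0 (h ▸ pls_mem_right f v)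
  have hne3 : pls s f i0 ≠ pls s f w := by
    intro h
    exact hw0 (h ▸ pls_mem_right f w)
  have h4 := four_le_ncard hfin (mem_PlaneSet (Ne.symm hf)) (mem_PlaneSet hu)
    (mem_PlaneSet hv) (mem_PlaneSet hw) hne1 hne2 hne3 h1 h2 h3
  omega

/-- If three directions lie in a rank-2 plane `V` and a fourth direction `r` with few
planes is "generic" w.r.t. them, then `r` also lies in `V`. -/
lemma absorb (hli : ∀ i j, i ≠ j → LinearIndependent ℝ ![s i, s j])
    {V : Submodule ℝ V3} (hV : Module.finrank ℝ ↥V = 2)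
    {α β γ r i0 : Fin m} (hr : r ≠ i0)
    (hαβ : α ≠ β) (hαγ : α ≠ γ) (hβγ : β ≠ γ)
    (hαV : s α ∈ V) (hβV : s β ∈ V) (hγV : s γ ∈ V)
    (hα0 : s α ∉ pls s r i0) (hβ0 : s β ∉ pls s r i0) (hγ0 : s γ ∉ pls s r i0)
    (hc3 : (PlaneSet s r).ncard ≤ 3) : s r ∈ V := by
  have hαr : α ≠ r := by
    intro h
    rw [h] at hα0
    exact hα0 (pls_mem_left r i0)
  have hβr : β ≠ r := by
    intro h
    rw [h] at hβ0
    exact hβ0 (pls_mem_left r i0)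
  have hγr : γ ≠ r := by
    intro h
    rw [h] at hγ0
    exact hγ0 (pls_mem_left r i0)
  obtain ⟨p, q, hpq, hp, hq, hmem⟩ :=
    pigeon hli hr hc3 hαr hβr hγr hαβ hαγ hβγ hα0 hβ0 hγ0
  have hpV : s p ∈ V := by
    rcases hp with h | h | h
    · rw [h]; exact hαV
    · rw [h]; exact hβV
    · rw [Set.mem_singleton_iff.1 h]; exact hγV
  have hqV : s q ∈ V := by
    rcases hq with h | h | h
    · rw [h]; exact hαV
    · rw [h]; exact hβV
    · rw [Set.mem_singleton_iff.1 h]; exact hγV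
  rwa [pls_eq_of_mem hli hpq hV hpV hqV] at hmem

end CoreAux

/-- The combinatorial core: in a spanning, non-near-pencil configuration of pairwise
independent directions, if the directions fall into exactly 4 planes through `s i0`,
then some other direction also lies on at least 4 such planes. -/
lemma core_lemma {m : ℕ} {s : Fin m → V3} (hs0 : ∀ i, s i ≠ 0)
    (hli : ∀ i j, i ≠ j → LinearIndependent ℝ ![s i, s j])
    (htop : Submodule.span ℝ (Set.range s) = ⊤)
    (hnf : ∀ i : Fin m, ¬ (Module.finrank ℝ ↥(Submodule.span ℝ (s '' {j | j ≠ i})) ≤ 2))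
    (i0 : Fin m) (h4 : (PlaneSet s i0).ncard = 4) :
    ∃ i1, i1 ≠ i0 ∧ 4 ≤ (PlaneSet s i1).ncard := by
  classical
  by_contra hcon
  push_neg at hcon
  have hc3 : ∀ i, i ≠ i0 → (PlaneSet s i).ncard ≤ 3 := by
    intro i hi
    have := hcon i hi
    omega
  have hfin : (PlaneSet s i0).Finite := (Set.toFinite _).image _
  have hcard : hfin.toFinset.card = 4 := by
    rw [← Set.ncard_eq_toFinset_card _ hfin, h4]
  obtain ⟨H1, hH1⟩ := Finset.card_pos.1 (show 0 < hfin.toFinset.card by omega)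
  have hcard3 : (hfin.toFinset.erase H1).card = 3 := by
    rw [Finset.card_erase_of_mem hH1, hcard]
  obtain ⟨H2, H3, H4, h23, h24, h34, hE3⟩ := Finset.card_eq_three.1 hcard3
  have h12 : H1 ≠ H2 := by
    intro h
    have hmem : H2 ∈ hfin.toFinset.erase H1 := by rw [hE3]; simp
    rw [← h] at hmem
    exact (Finset.notMem_erase H1 _) hmem
  have h13 : H1 ≠ H3 := by
    intro h
    have hmem : H3 ∈ hfin.toFinset.erase H1 := by rw [hE3]; simp
    rw [← h] at hmem
    exact (Finset.notMem_erase H1 _) hmem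
  have h14 : H1 ≠ H4 := by
    intro h
    have hmem : H4 ∈ hfin.toFinset.erase H1 := by rw [hE3]; simp
    rw [← h] at hmem
    exact (Finset.notMem_erase H1 _) hmem
  have hFeq : hfin.toFinset = {H1, H2, H3, H4} := by
    rw [← Finset.insert_erase hH1, hE3]
  have hmemP : ∀ H, H ∈ ({H1, H2, H3, H4} : Finset (Submodule ℝ V3)) → H ∈ PlaneSet s i0 := by
    intro H hH
    rw [← hFeq] at hH
    exact hfin.mem_toFinset.1 hH
  obtain ⟨a1, ha1ne, ha1⟩ := hmemP H1 (by simp)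
  obtain ⟨a2, ha2ne, ha2⟩ := hmemP H2 (by simp)
  obtain ⟨a3, ha3ne, ha3⟩ := hmemP H3 (by simp)
  obtain ⟨a4, ha4ne, ha4⟩ := hmemP H4 (by simp)
  have hb1 : pls s i0 a1 = H1 := ha1
  have hb2 : pls s i0 a2 = H2 := ha2
  have hb3 : pls s i0 a3 = H3 := ha3
  have hb4 : pls s i0 a4 = H4 := ha4
  have hcover : ∀ j, j ≠ i0 →
      pls s i0 j = H1 ∨ pls s i0 j = H2 ∨ pls s i0 j = H3 ∨ pls s i0 j = H4 := by
    intro j hj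
    have hmem : pls s i0 j ∈ hfin.toFinset := hfin.mem_toFinset.2 (mem_PlaneSet hj)
    rw [hFeq] at hmem
    simpa using hmem
  have hkey : ∀ j k : Fin m, j ≠ i0 → k ≠ i0 → pls s i0 j ≠ pls s i0 k →
      s j ∉ pls s i0 k := by
    intro j k hj hk hne hmem
    exact hne (pls_eq_of_mem hli (Ne.symm hj) (pls_rank hli (Ne.symm hk))
      (pls_mem_left i0 k) hmem)
  have ha12 : a1 ≠ a2 := by intro h; apply h12; rw [← hb1, ← hb2, h]
  have ha13 : a1 ≠ a3 := by intro h; apply h13; rw [← hb1, ← hb3, h]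
  have ha14 : a1 ≠ a4 := by intro h; apply h14; rw [← hb1, ← hb4, h]
  have ha23 : a2 ≠ a3 := by intro h; apply h23; rw [← hb2, ← hb3, h]
  have ha24 : a2 ≠ a4 := by intro h; apply h24; rw [← hb2, ← hb4, h]
  have ha34 : a3 ≠ a4 := by intro h; apply h34; rw [← hb3, ← hb4, h]
  have hnotmem : ∀ x y : Fin m, x ∈ ({a1, a2, a3, a4} : Set (Fin m)) →
      y ∈ ({a1, a2, a3, a4} : Set (Fin m)) → x ≠ y → s x ∉ pls s y i0 := by
    intro x y hx hy hxy
    simp only [Set.mem_insert_iff, Set.mem_singleton_iff] at hx hy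
    rcases hx with rfl | rfl | rfl | rfl <;> rcases hy with rfl | rfl | rfl | rfl <;>
      first
      | exact absurd rfl hxy
      | (rw [pls_comm]
         apply hkey <;>
           first
           | assumption
           | (simp only [hb1, hb2, hb3, hb4]
              first
              | exact h12 | exact h13 | exact h14 | exact h23 | exact h24 | exact h34
              | exact Ne.symm h12 | exact Ne.symm h13 | exact Ne.symm h14
              | exact Ne.symm h23 | exact Ne.symm h24 | exact Ne.symm h34))
  -- Step 1: two of a2,a3,a4 are coplanar with a1
  obtain ⟨p, q, hpq, hp, hq, hVmem⟩ := pigeon hli ha1ne (hc3 a1 ha1ne)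
    (Ne.symm ha12) (Ne.symm ha13) (Ne.symm ha14) ha23 ha24 ha34
    (hnotmem a2 a1 (by simp) (by simp) (Ne.symm ha12))
    (hnotmem a3 a1 (by simp) (by simp) (Ne.symm ha13))
    (hnotmem a4 a1 (by simp) (by simp) (Ne.symm ha14))
  simp only [Set.mem_insert_iff, Set.mem_singleton_iff] at hp hq
  have hVrank : Module.finrank ℝ ↥(pls s p q) = 2 := pls_rank hli hpq
  have hpreps : p ∈ ({a1, a2, a3, a4} : Set (Fin m)) := by
    rcases hp with h | h | h <;> simp [h]
  have hqreps : q ∈ ({a1, a2, a3, a4} : Set (Fin m)) := by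
    rcases hq with h | h | h <;> simp [h]
  have ha1p : a1 ≠ p := by
    rcases hp with h | h | h <;> rw [h]
    · exact ha12
    · exact ha13
    · exact ha14
  have ha1q : a1 ≠ q := by
    rcases hq with h | h | h <;> rw [h]
    · exact ha12
    · exact ha13
    · exact ha14
  have hpne : p ≠ i0 := by
    rcases hp with h | h | h <;> rw [h] <;> assumption
  have hqne : q ≠ i0 := by
    rcases hq with h | h | h <;> rw [h] <;> assumption
  -- Step 2: all four representatives lie in V = pls s p q
  have hall : ∀ r : Fin m, r ∈ ({a1, a2, a3, a4} : Set (Fin m)) → s r ∈ pls s p q := by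
    intro r hrm
    by_cases hra1 : r = a1
    · rw [hra1]; exact hVmem
    by_cases hrp : r = p
    · rw [hrp]; exact pls_mem_left p q
    by_cases hrq : r = q
    · rw [hrq]; exact pls_mem_right p q
    have hrne : r ≠ i0 := by
      simp only [Set.mem_insert_iff, Set.mem_singleton_iff] at hrm
      rcases hrm with h | h | h | h <;> rw [h] <;> assumption
    refine absorb hli hVrank hrne ha1p ha1q hpq hVmem (pls_mem_left p q) (pls_mem_right p q)
      ?_ ?_ ?_ (hc3 r hrne)
    · exact hnotmem a1 r (by simp) hrm (fun h => hra1 h.symm)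
    · exact hnotmem p r hpreps hrm (fun h => hrp h.symm)
    · exact hnotmem q r hqreps hrm (fun h => hrq h.symm)
  -- Step 3: some direction avoids V, else near-pencil
  obtain ⟨x, hxne, hxV⟩ : ∃ x, x ≠ i0 ∧ s x ∉ pls s p q := by
    by_contra hax
    push_neg at hax
    apply hnf i0
    have hle : Submodule.span ℝ (s '' {j | j ≠ i0}) ≤ pls s p q := by
      rw [Submodule.span_le]
      rintro v ⟨j, hj, rfl⟩
      exact hax j hj
    have := Submodule.finrank_mono hle
    rw [hVrank] at this
    exact this
  -- Step 4: x must be coplanar with two of the representatives, forcing x into V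
  have habs : ∀ α β γ : Fin m, α ∈ ({a1, a2, a3, a4} : Set (Fin m)) →
      β ∈ ({a1, a2, a3, a4} : Set (Fin m)) → γ ∈ ({a1, a2, a3, a4} : Set (Fin m)) →
      α ≠ β → α ≠ γ → β ≠ γ →
      s α ∉ pls s x i0 → s β ∉ pls s x i0 → s γ ∉ pls s x i0 → False := by
    intro α β γ hα hβ hγ hαβ hαγ hβγ h1 h2 h3
    exact hxV (absorb hli hVrank hxne hαβ hαγ hβγ (hall α hα) (hall β hβ) (hall γ hγ)
      h1 h2 h3 (hc3 x hxne))
  have hxnm : ∀ t : Fin m, t ∈ ({a1, a2, a3, a4} : Set (Fin m)) → t ≠ i0 →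
      pls s i0 t ≠ pls s i0 x → s t ∉ pls s x i0 := by
    intro t htm htne hne
    rw [pls_comm]
    exact hkey t x htne hxne hne
  rcases hcover x hxne with hcx | hcx | hcx | hcx
  · exact habs a2 a3 a4 (by simp) (by simp) (by simp) ha23 ha24 ha34
      (hxnm a2 (by simp) ha2ne (by rw [hb2, hcx]; exact Ne.symm h12))
      (hxnm a3 (by simp) ha3ne (by rw [hb3, hcx]; exact Ne.symm h13))
      (hxnm a4 (by simp) ha4ne (by rw [hb4, hcx]; exact Ne.symm h14))
  · exact habs a1 a3 a4 (by simp) (by simp) (by simp) ha13 ha14 ha34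
      (hxnm a1 (by simp) ha1ne (by rw [hb1, hcx]; exact h12))
      (hxnm a3 (by simp) ha3ne (by rw [hb3, hcx]; exact Ne.symm h23))
      (hxnm a4 (by simp) ha4ne (by rw [hb4, hcx]; exact Ne.symm h24))
  · exact habs a1 a2 a4 (by simp) (by simp) (by simp) ha12 ha14 ha24
      (hxnm a1 (by simp) ha1ne (by rw [hb1, hcx]; exact h13))
      (hxnm a2 (by simp) ha2ne (by rw [hb2, hcx]; exact h23))
      (hxnm a4 (by simp) ha4ne (by rw [hb4, hcx]; exact Ne.symm h34))
  · exact habs a1 a2 a3 (by simp) (by simp) (by simp) ha12 ha13 ha23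
      (hxnm a1 (by simp) ha1ne (by rw [hb1, hcx]; exact h14))
      (hxnm a2 (by simp) ha2ne (by rw [hb2, hcx]; exact h24))
      (hxnm a3 (by simp) ha3ne (by rw [hb3, hcx]; exact h34))

end BeltAux

/-- Lemma 4.5: a non-prism zonotope in ℝ³ with a belt of 8 facets has another,
non-parallel, edge whose belt has at least 8 facets. -/
theorem nonprism_zonotope_belt_eight_has_other_big_belt
    (P : Set (Fin 3 → ℝ)) (hz : IsZonotope3 P) (hnp : ¬ IsPrism3 P)
    (E : Set (Fin 3 → ℝ)) (hE : IsFaceOfDim P E 1)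
    (h8 : (Belt P E).ncard = 8) :
    ∃ M : Set (Fin 3 → ℝ), IsFaceOfDim P M 1 ∧
      vectorSpan ℝ M ≠ vectorSpan ℝ E ∧ 8 ≤ (Belt P M).ncard := by
  obtain ⟨m, s, hs0, hind, hP⟩ := hz
  subst hP
  rw [← Zo_def s] at hnp hE h8 ⊢
  have hli : ∀ i j, i ≠ j → LinearIndependent ℝ ![s i, s j] := fun i j hij =>
    LinearIndependent.pair_iff.2 fun a b hab => hind i j hij a b hab
  obtain ⟨g, i0, hEeq, hJg⟩ := edge_classify hs0 hli hE
  subst hEeq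
  have htop := htop_of_nonprism hs0 hnp i0
  have hnf := nonflat_of_nonprism hs0 hnp
  have h8' : 2 * (PlaneSet s i0).ncard = 8 := by
    rw [← belt_ncard hs0 hli htop hJg]
    exact h8
  have h4 : (PlaneSet s i0).ncard = 4 := by omega
  obtain ⟨i1, hne, h4'⟩ := core_lemma hs0 hli htop hnf i0 h4
  obtain ⟨g1, hJg1⟩ := exists_generic hs0 hli i1
  refine ⟨maxSet g1 (Zo s), ⟨isExposed_maxSet g1 (Zo s), maxSet_Zo_nonempty s g1, ?_⟩, ?_, ?_⟩
  · rw [vectorSpan_maxSet_Zo, hJg1, Set.image_singleton, finrank_span_singleton (hs0 i1)]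
  · rw [vectorSpan_maxSet_Zo, vectorSpan_maxSet_Zo, hJg1, hJg,
      Set.image_singleton, Set.image_singleton]
    intro hspan
    have hmem : s i1 ∈ Submodule.span ℝ {s i0} :=
      hspan ▸ Submodule.mem_span_singleton_self (s i1)
    obtain ⟨c, hc⟩ := Submodule.mem_span_singleton.1 hmem
    have h10 := (hind i1 i0 hne 1 (-c) (by linear_combination (norm := module) - hc)).1
    norm_num at h10
  · rw [belt_ncard hs0 hli htop hJg1]
    omega
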